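/- Let A be a sequence of n distinct integers between 1 and n whose permutation graph G_A is bipartite, and let I and J be maximum feasible sets for A. If the instance (A, I, J) has a forbidden pair, then there is no reconfiguration sequence between I and J. -/

import Mathlib

/-- One step of patience sorting: place index `i` (with value `a i`) on the
leftmost pile whose current top element is greater than `a i`, or start a
new pile at the right end if no such pile exists.  Each pile is a list of
indices with the head being the top (most recently placed) element. -/
def place (a : ℕ → ℕ) : List (List ℕ) → ℕ → List (List ℕ)
  | [], i => [[i]]
  | p :: ps, i => if a i < a p.headI then (i :: p) :: ps else p :: place a ps i

/-- The (nonempty) piles obtained by patience sorting, processing the values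
`a i` for `i ∈ idxs` in order. -/
def pilesOf (a : ℕ → ℕ) (idxs : List ℕ) : List (List ℕ) :=
  idxs.foldl (place a) []

/-- `I` is the index set of an increasing subsequence of `a`. -/
def Feasible (a : ℕ → ℕ) (I : Finset ℕ) : Prop :=
  ∀ i ∈ I, ∀ j ∈ I, i < j → a i < a j

/-- The permutation graph of the sequence `a₁, …, aₙ`: vertices are the
indices `1, …, n`, and `i < j` are adjacent iff `a i > a j`. -/
def permGraph (a : ℕ → ℕ) (n : ℕ) : SimpleGraph ℕ where
  Adj i j := i ∈ Finset.Icc 1 n ∧ j ∈ Finset.Icc 1 n ∧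
    ((i < j ∧ a j < a i) ∨ (j < i ∧ a i < a j))
  symm := by
    constructor
    intro i j ⟨hi, hj, h⟩
    exact ⟨hj, hi, h.symm⟩
  loopless := by
    constructor
    intro i ⟨_, _, h⟩
    rcases h with ⟨h, _⟩ | ⟨h, _⟩ <;> exact lt_irrefl i h

/-- A maximum feasible set for `a₁, …, aₙ`: a feasible subset of the index
set `{1, …, n}` of largest cardinality (equivalently, a maximum independent
set of the permutation graph). -/
def MaxFeasibleIcc (a : ℕ → ℕ) (n : ℕ) (I : Finset ℕ) : Prop :=
  I ⊆ Finset.Icc 1 n ∧ Feasible a I ∧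
    ∀ J ⊆ Finset.Icc 1 n, Feasible a J → J.card ≤ I.card

/-- With respect to maximum feasible sets `I` and `J`, a pile is *mixed* if it
contains exactly two elements `a i` and `a j` with `i ∈ I` and `j ∈ J`
(and `i ≠ j`). -/
def MixedPile (I J : Finset ℕ) (p : List ℕ) : Prop :=
  p.length = 2 ∧ ∃ i j : ℕ, i ≠ j ∧ i ∈ p ∧ j ∈ p ∧ i ∈ I ∧ j ∈ J

/-- The instance `(A, I, J)` has a *forbidden pair*: two distinct mixed piles
whose four vertices induce a cycle of length `4` in the permutation graph. -/
def HasForbiddenPair (a : ℕ → ℕ) (n : ℕ) (I J : Finset ℕ) : Prop :=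
  ∃ t t' : ℕ, t ≠ t' ∧ ∃ p p' : List ℕ,
    (pilesOf a ((List.range n).map (· + 1)))[t]? = some p ∧
    (pilesOf a ((List.range n).map (· + 1)))[t']? = some p' ∧
    ∃ i j i' j' : ℕ,
      (i ≠ j ∧ i ∈ p ∧ j ∈ p ∧ i ∈ I ∧ j ∈ J ∧ p.length = 2) ∧
      (i' ≠ j' ∧ i' ∈ p' ∧ j' ∈ p' ∧ i' ∈ I ∧ j' ∈ J ∧ p'.length = 2) ∧
      -- the four vertices are distinct and induce a 4-cycle i - j - i' - j' - i
      i ≠ i' ∧ j ≠ j' ∧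
      (permGraph a n).Adj i j ∧ (permGraph a n).Adj j i' ∧
      (permGraph a n).Adj i' j' ∧ (permGraph a n).Adj j' i ∧
      ¬ (permGraph a n).Adj i i' ∧ ¬ (permGraph a n).Adj j j'

/-- One reconfiguration step: `J` is obtained from `I` by simultaneously
adding an element `j ∉ I` and removing an element `k ∈ I`. -/
def ReconStep (I J : Finset ℕ) : Prop :=
  ∃ j k : ℕ, j ∉ I ∧ k ∈ I ∧ J = insert j I \ {k}

/-- `f 0, f 1, …, f ℓ` is a reconfiguration sequence of feasible sets
(subsets of the index universe `S`), each obtained from the previous one by a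
single exchange step. -/
def ReconSeq (a : ℕ → ℕ) (S : Finset ℕ) (ℓ : ℕ) (f : ℕ → Finset ℕ) : Prop :=
  (∀ i ≤ ℓ, f i ⊆ S ∧ Feasible a (f i)) ∧
    ∀ i < ℓ, ReconStep (f i) (f (i + 1))

/-!
Patience sorting splits the indices into piles, each a decreasing subsequence, such that every
element of a pile has an earlier and smaller element in the pile to its left. Following these
back pointers from the last pile gives an increasing subsequence with one element per pile, and an
increasing subsequence meets each pile at most once; so the number of piles is the maximum size of
a feasible set, and every maximum feasible set meets every pile.

For a forbidden pair of mixed piles `{i, j}` and `{i', j'}` with 4-cycle `i - j - i' - j'`, the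
edges `j - i'` and `j' - i` then force every maximum feasible set to contain `{i, i'}` or `{j, j'}`.
A single exchange removes only one element, so it never leads from a set containing `{i, i'}` to
one containing `{j, j'}`; hence every set of a reconfiguration sequence from `I` contains `i`,
which is adjacent to `j ∈ J`.
-/

lemma card_le_countP_of_subsingleton {α : Type*} [DecidableEq α] (ps : List (List α))
    (K : Finset α) (hK : ∀ z ∈ K, z ∈ ps.flatten)
    (hps : ∀ p ∈ ps, ∀ x ∈ p, ∀ y ∈ p, x ∈ K → y ∈ K → x = y) :
    K.card ≤ ps.countP (fun p => p.any (· ∈ K)) := by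
  induction ps generalizing K with
  | nil => simp_all [Finset.eq_empty_of_forall_notMem]
  | cons p ps ih =>
    rw [List.countP_cons, ← Finset.card_filter_add_card_filter_not (· ∈ p)]
    have hin : (K.filter (· ∈ p)).card ≤ if p.any (· ∈ K) then 1 else 0 := by
      split_ifs with hany
      · refine Finset.card_le_one.2 fun x hx y hy => ?_
        simp only [Finset.mem_filter] at hx hy
        exact hps p List.mem_cons_self x hx.2 y hy.2 hx.1 hy.1
      · rw [Nat.le_zero, Finset.card_eq_zero, Finset.filter_eq_empty_iff]
        exact fun x hx hxp => hany (List.any_eq_true.2 ⟨x, hxp, decide_eq_true hx⟩)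
    have hout : (K.filter (· ∉ p)).card ≤ ps.countP (fun p => p.any (· ∈ K)) := by
      refine (ih _ (fun z hz => ?_) (fun q hq x hx y hy hxK hyK => ?_)).trans
        (List.countP_mono_left fun q _ => ?_)
      · simp only [Finset.mem_filter] at hz
        simpa [hz.2] using hK z hz.1
      · exact hps q (List.mem_cons_of_mem _ hq) x hx y hy
          (Finset.mem_filter.1 hxK).1 (Finset.mem_filter.1 hyK).1
      · simp only [List.any_eq_true, decide_eq_true_eq, Finset.mem_filter]
        exact fun ⟨x, hx, hxK, _⟩ => ⟨x, hx, hxK⟩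
    omega

section Feasible

variable {a : ℕ → ℕ} {K : Finset ℕ}

lemma Feasible.insert {x : ℕ} (hK : Feasible a K) (hx : ∀ z ∈ K, z < x ∧ a z < a x) :
    Feasible a (insert x K) := by
  intro i hi j hj hij
  rcases Finset.mem_insert.1 hi with rfl | hiK <;> rcases Finset.mem_insert.1 hj with rfl | hjK
  · exact absurd hij (lt_irrefl _)
  · exact absurd (hx j hjK).1 hij.not_gt
  · exact (hx i hiK).2
  · exact hK i hiK j hjK hij

lemma Feasible.not_adj {n x y : ℕ} (hK : Feasible a K) (hx : x ∈ K) (hy : y ∈ K) :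
    ¬ (permGraph a n).Adj x y := by
  rintro ⟨-, -, ⟨hxy, hayx⟩ | ⟨hyx, haxy⟩⟩
  · exact (hK x hx y hy hxy).not_gt hayx
  · exact (hK y hy x hx hyx).not_gt haxy

lemma Feasible.eq_of_mem_of_pairwise {p : List ℕ} (hK : Feasible a K)
    (hp : p.Pairwise (fun x y => y < x ∧ a x < a y)) :
    ∀ x ∈ p, ∀ y ∈ p, x ∈ K → y ∈ K → x = y := by
  have key : ∀ x y, y < x ∧ a x < a y → x ∈ K → y ∈ K → x = y :=
    fun x y hxy hx hy => absurd (hK y hy x hx hxy.1) hxy.2.not_gt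
  exact List.Pairwise.forall_of_forall_of_flip (fun _ _ _ _ => rfl) (hp.imp (key _ _))
    (hp.imp fun h hy hx => (key _ _ h hx hy).symm)

end Feasible

section Patience

variable {a : ℕ → ℕ} {ps : List (List ℕ)} {i : ℕ}

structure PileInvariant (a : ℕ → ℕ) (ps : List (List ℕ)) : Prop where
  ne_nil : ∀ p ∈ ps, p ≠ []
  pairwise : ∀ p ∈ ps, p.Pairwise (fun x y => y < x ∧ a x < a y)
  isChain : ps.IsChain (fun p q => ∀ x ∈ q, ∃ y ∈ p, y < x ∧ a y < a x)

lemma flatten_place_perm (a : ℕ → ℕ) (ps : List (List ℕ)) (i : ℕ) :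
    (place a ps i).flatten.Perm (i :: ps.flatten) := by
  induction ps with
  | nil => simp [place]
  | cons p ps ih =>
    by_cases h : a i < a p.headI
    · simp [place, h]
    · simpa [place, h] using (ih.append_left p).trans List.perm_middle

lemma flatten_pilesOf_perm (a : ℕ → ℕ) (idxs : List ℕ) :
    (pilesOf a idxs).flatten.Perm idxs := by
  induction idxs using List.reverseRecOn with
  | nil => simp [pilesOf]
  | append_singleton l i ih =>
    rw [pilesOf, List.foldl_append]
    exact (flatten_place_perm a _ i).trans
      ((ih.cons i).trans (List.perm_append_singleton i l).symm)

lemma mem_flatten_pilesOf {idxs : List ℕ} {x : ℕ} :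
    x ∈ (pilesOf a idxs).flatten ↔ x ∈ idxs :=
  (flatten_pilesOf_perm a idxs).mem_iff

lemma mem_head?_place {q : List ℕ} (hq : q ∈ (place a ps i).head?) {x : ℕ} (hx : x ∈ q) :
    x = i ∨ ∃ q₀ ∈ ps.head?, x ∈ q₀ := by
  cases ps with
  | nil => simp_all [place, eq_comm]
  | cons p ps =>
    by_cases h : a i < a p.headI
    · simp only [place, if_pos h, List.head?_cons, Option.mem_some_iff] at hq
      subst hq
      simpa using hx
    · simp only [place, if_neg h, List.head?_cons, Option.mem_some_iff] at hq
      subst hq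
      exact Or.inr ⟨_, rfl, hx⟩

lemma PileInvariant.cons_head {p : List ℕ} (h : PileInvariant a (p :: ps))
    (hi : ∀ y ∈ p, y < i ∧ a i < a y) : PileInvariant a ((i :: p) :: ps) := by
  have hchain := List.isChain_cons.1 h.isChain
  refine ⟨?_, ?_, List.isChain_cons.2 ⟨fun q hq x hx => ?_, hchain.2⟩⟩
  · simpa using fun q hq => h.ne_nil q (List.mem_cons_of_mem _ hq)
  · intro q hq
    rcases List.mem_cons.1 hq with rfl | hq
    · exact (h.pairwise _ List.mem_cons_self).cons hi
    · exact h.pairwise q (List.mem_cons_of_mem _ hq)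
  · obtain ⟨y, hy, hyx⟩ := hchain.1 q hq x hx
    exact ⟨y, List.mem_cons_of_mem _ hy, hyx⟩

lemma PileInvariant.tail {p : List ℕ} (h : PileInvariant a (p :: ps)) : PileInvariant a ps :=
  ⟨fun q hq => h.ne_nil q (List.mem_cons_of_mem _ hq),
    fun q hq => h.pairwise q (List.mem_cons_of_mem _ hq), (List.isChain_cons.1 h.isChain).2⟩

lemma PileInvariant.place (h : PileInvariant a ps)
    (hi : ∀ x ∈ ps.flatten, x < i ∧ a x ≠ a i) : PileInvariant a (place a ps i) := by
  induction ps with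
  | nil => exact ⟨by simp [_root_.place], by simp [_root_.place], by simp [_root_.place]⟩
  | cons p ps ih =>
    obtain ⟨x₀, p, rfl⟩ := List.exists_cons_of_ne_nil (h.ne_nil _ List.mem_cons_self)
    have hpw := h.pairwise _ List.mem_cons_self
    have hchain := List.isChain_cons.1 h.isChain
    have hx₀i := hi x₀ (by simp)
    by_cases hx₀ : a i < a x₀
    · rw [_root_.place, List.headI_cons, if_pos hx₀]
      refine h.cons_head fun y hy =>
        ⟨(hi y (List.mem_flatten_of_mem List.mem_cons_self hy)).1, ?_⟩
      rcases List.mem_cons.1 hy with rfl | hy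
      · exact hx₀
      · exact hx₀.trans (List.rel_of_pairwise_cons hpw hy).2
    · rw [_root_.place, List.headI_cons, if_neg hx₀]
      have hps := ih h.tail fun x hx => hi x (List.mem_append_right _ hx)
      refine ⟨?_, ?_, List.isChain_cons.2 ⟨fun q hq x hx => ?_, hps.isChain⟩⟩
      · intro q hq
        rcases List.mem_cons.1 hq with rfl | hq
        · exact List.cons_ne_nil _ _
        · exact hps.ne_nil q hq
      · intro q hq
        rcases List.mem_cons.1 hq with rfl | hq
        · exact hpw
        · exact hps.pairwise q hq
      · rcases mem_head?_place hq hx with rfl | ⟨q₀, hq₀, hx⟩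
        · exact ⟨x₀, List.mem_cons_self, hx₀i.1, lt_of_le_of_ne (not_lt.1 hx₀) hx₀i.2⟩
        · exact hchain.1 q₀ hq₀ x hx

lemma pileInvariant_pilesOf {idxs : List ℕ}
    (h : idxs.Pairwise (fun x y => x < y ∧ a x ≠ a y)) : PileInvariant a (pilesOf a idxs) := by
  induction idxs using List.reverseRecOn with
  | nil => exact ⟨by simp [pilesOf], by simp [pilesOf], by simp [pilesOf]⟩
  | append_singleton l i ih =>
    rw [List.pairwise_append] at h
    rw [pilesOf, List.foldl_append]
    exact (ih h.1).place fun x hx =>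
      h.2.2 x (mem_flatten_pilesOf.1 hx) i (List.mem_singleton_self i)

end Patience

section Counting

variable {a : ℕ → ℕ} {ps : List (List ℕ)}

lemma PileInvariant.exists_feasible_of_mem_getElem (h : PileInvariant a ps) (t : ℕ)
    (ht : t < ps.length) {x : ℕ} (hx : x ∈ ps[t]) :
    ∃ K : Finset ℕ, Feasible a K ∧ K.card = t + 1 ∧ (∀ z ∈ K, z ∈ ps.flatten) ∧
      ∀ z ∈ K, z ≤ x ∧ a z ≤ a x := by
  induction t generalizing x with
  | zero =>
    refine ⟨{x}, fun i hi j hj hij => ?_, rfl,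
      by simpa using List.mem_flatten_of_mem (List.getElem_mem _) hx, by simp⟩
    simp only [Finset.mem_singleton] at hi hj
    exact absurd hij (by omega)
  | succ t ih =>
    obtain ⟨y, hy, hyx, hayx⟩ := h.isChain.getElem t ht x hx
    obtain ⟨K, hKf, hKc, hKps, hKy⟩ := ih (by omega) hy
    have hxK : ∀ z ∈ K, z < x ∧ a z < a x := fun z hz =>
      ⟨(hKy z hz).1.trans_lt hyx, (hKy z hz).2.trans_lt hayx⟩
    refine ⟨insert x K, hKf.insert hxK, ?_, ?_, ?_⟩
    · rw [Finset.card_insert_of_notMem (fun hx' => lt_irrefl x (hxK x hx').1), hKc]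
    · intro z hz
      rcases Finset.mem_insert.1 hz with rfl | hz
      · exact List.mem_flatten_of_mem (List.getElem_mem _) hx
      · exact hKps z hz
    · intro z hz
      rcases Finset.mem_insert.1 hz with rfl | hz
      · exact ⟨le_rfl, le_rfl⟩
      · exact ⟨(hxK z hz).1.le, (hxK z hz).2.le⟩

lemma PileInvariant.exists_feasible_card_eq_length (h : PileInvariant a ps) :
    ∃ K : Finset ℕ, Feasible a K ∧ K.card = ps.length ∧ ∀ z ∈ K, z ∈ ps.flatten := by
  rcases eq_or_ne ps [] with rfl | hps
  · exact ⟨∅, fun _ h => absurd h (Finset.notMem_empty _), rfl, by simp⟩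
  have ht : ps.length - 1 < ps.length := Nat.sub_lt (List.length_pos_iff.2 hps) one_pos
  obtain ⟨x, hx⟩ := List.exists_mem_of_ne_nil _ (h.ne_nil _ (List.getElem_mem ht))
  obtain ⟨K, hKf, hKc, hKps, -⟩ := h.exists_feasible_of_mem_getElem _ ht hx
  exact ⟨K, hKf, by omega, hKps⟩

lemma PileInvariant.card_le_countP (h : PileInvariant a ps) {K : Finset ℕ} (hK : Feasible a K)
    (hKps : ∀ z ∈ K, z ∈ ps.flatten) : K.card ≤ ps.countP (fun p => p.any (· ∈ K)) :=
  card_le_countP_of_subsingleton ps K hKps fun p hp => hK.eq_of_mem_of_pairwise (h.pairwise p hp)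

lemma PileInvariant.card_le_length (h : PileInvariant a ps) {K : Finset ℕ} (hK : Feasible a K)
    (hKps : ∀ z ∈ K, z ∈ ps.flatten) : K.card ≤ ps.length :=
  (h.card_le_countP hK hKps).trans List.countP_le_length

lemma PileInvariant.exists_mem_of_card_eq_length (h : PileInvariant a ps) {K : Finset ℕ}
    (hK : Feasible a K) (hKps : ∀ z ∈ K, z ∈ ps.flatten) (hcard : K.card = ps.length)
    {p : List ℕ} (hp : p ∈ ps) : ∃ x ∈ p, x ∈ K := by
  by_contra! hpK
  have hlt : ps.countP (fun p => p.any (· ∈ K)) < ps.length :=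
    List.countP_lt_length_iff.2 ⟨p, hp, by simpa using hpK⟩
  exact absurd hcard ((h.card_le_countP hK hKps).trans_lt hlt).ne

end Counting

section MaxFeasible

variable {a : ℕ → ℕ} {n : ℕ} {K : Finset ℕ}

lemma mem_range_map_succ {z : ℕ} :
    z ∈ (List.range n).map (· + 1) ↔ z ∈ Finset.Icc 1 n := by
  simp only [List.mem_map, List.mem_range, Finset.mem_Icc]
  constructor
  · rintro ⟨k, hk, rfl⟩
    omega
  · rintro ⟨h1, h2⟩
    exact ⟨z - 1, by omega, by omega⟩

lemma mem_flatten_pilesOf_range {z : ℕ} :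
    z ∈ (pilesOf a ((List.range n).map (· + 1))).flatten ↔ z ∈ Finset.Icc 1 n :=
  mem_flatten_pilesOf.trans mem_range_map_succ

lemma pileInvariant_pilesOf_range
    (hinj : ∀ i ∈ Finset.Icc 1 n, ∀ j ∈ Finset.Icc 1 n, a i = a j → i = j) :
    PileInvariant a (pilesOf a ((List.range n).map (· + 1))) := by
  have hlt : ((List.range n).map (· + 1)).Pairwise (· < ·) :=
    List.pairwise_lt_range.map _ fun _ _ h => by omega
  refine pileInvariant_pilesOf (hlt.imp_of_mem fun hx hy hxy => ?_)
  exact ⟨hxy, fun hax =>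
    hxy.ne (hinj _ (mem_range_map_succ.1 hx) _ (mem_range_map_succ.1 hy) hax)⟩

lemma MaxFeasibleIcc.card_eq_length_pilesOf
    (hinj : ∀ i ∈ Finset.Icc 1 n, ∀ j ∈ Finset.Icc 1 n, a i = a j → i = j)
    (hK : MaxFeasibleIcc a n K) :
    K.card = (pilesOf a ((List.range n).map (· + 1))).length := by
  have h := pileInvariant_pilesOf_range hinj
  obtain ⟨L, hLf, hLc, hLps⟩ := h.exists_feasible_card_eq_length
  refine le_antisymm (h.card_le_length hK.2.1 fun z hz => mem_flatten_pilesOf_range.2 (hK.1 hz)) ?_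
  exact hLc ▸ hK.2.2 L (fun z hz => mem_flatten_pilesOf_range.1 (hLps z hz)) hLf

lemma MaxFeasibleIcc.mem_or_mem_of_mem_pilesOf
    (hinj : ∀ i ∈ Finset.Icc 1 n, ∀ j ∈ Finset.Icc 1 n, a i = a j → i = j)
    (hK : MaxFeasibleIcc a n K) {p : List ℕ} (hp : p ∈ pilesOf a ((List.range n).map (· + 1)))
    (hlen : p.length = 2) {i j : ℕ} (hij : i ≠ j) (hi : i ∈ p) (hj : j ∈ p) :
    i ∈ K ∨ j ∈ K := by
  obtain ⟨x, hx, hxK⟩ := (pileInvariant_pilesOf_range hinj).exists_mem_of_card_eq_length hK.2.1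
    (fun z hz => mem_flatten_pilesOf_range.2 (hK.1 hz)) (hK.card_eq_length_pilesOf hinj) hp
  obtain ⟨u, v, rfl⟩ := List.length_eq_two.1 hlen
  simp only [List.mem_cons, List.not_mem_nil, or_false] at hi hj hx
  grind

lemma HasForbiddenPair.exists_mem_pair_or_mem_pair
    (hinj : ∀ i ∈ Finset.Icc 1 n, ∀ j ∈ Finset.Icc 1 n, a i = a j → i = j)
    {I J : Finset ℕ} (hfp : HasForbiddenPair a n I J) :
    ∃ i j i' j', i ∈ I ∧ i' ∈ I ∧ j ∈ J ∧ i ≠ i' ∧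
      (permGraph a n).Adj i j ∧ (permGraph a n).Adj i' j' ∧
      ∀ K, MaxFeasibleIcc a n K → (i ∈ K ∧ i' ∈ K) ∨ (j ∈ K ∧ j' ∈ K) := by
  obtain ⟨_, _, -, p, p', hp, hp', i, j, i', j', ⟨hij, hip, hjp, hiI, hjJ, hp2⟩,
    ⟨hij', hip', hjp', hi'I, -, hp2'⟩, hii', -, hAij, hAji', hAi'j', hAj'i, -, -⟩ := hfp
  refine ⟨i, j, i', j', hiI, hi'I, hjJ, hii', hAij, hAi'j', fun K hK => ?_⟩
  rcases hK.mem_or_mem_of_mem_pilesOf hinj (List.mem_of_getElem? hp) hp2 hij hip hjp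
    with hi | hj <;>
  rcases hK.mem_or_mem_of_mem_pilesOf hinj (List.mem_of_getElem? hp') hp2' hij' hip' hjp'
    with hi' | hj'
  · exact Or.inl ⟨hi, hi'⟩
  · exact absurd hAj'i (hK.2.1.not_adj hj' hi)
  · exact absurd hAji' (hK.2.1.not_adj hj hi')
  · exact Or.inr ⟨hj, hj'⟩

lemma MaxFeasibleIcc.of_card_eq {I : Finset ℕ} (hI : MaxFeasibleIcc a n I)
    (hK : K ⊆ Finset.Icc 1 n) (hKf : Feasible a K) (hcard : K.card = I.card) :
    MaxFeasibleIcc a n K :=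
  ⟨hK, hKf, fun L hL hLf => hcard ▸ hI.2.2 L hL hLf⟩

end MaxFeasible

section Reconfiguration

variable {I J : Finset ℕ}

lemma ReconStep.card_eq (h : ReconStep I J) : J.card = I.card := by
  obtain ⟨j, k, hj, hk, rfl⟩ := h
  rw [Finset.card_sdiff_of_subset (by simpa using Finset.mem_insert_of_mem hk),
    Finset.card_insert_of_notMem hj, Finset.card_singleton, Nat.add_sub_cancel]

lemma ReconStep.mem_or_mem (h : ReconStep I J) {i i' : ℕ} (hi : i ∈ I) (hi' : i' ∈ I)
    (hii' : i ≠ i') : i ∈ J ∨ i' ∈ J := by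
  obtain ⟨j, k, -, -, rfl⟩ := h
  simp only [Finset.mem_sdiff, Finset.mem_insert, Finset.mem_singleton, hi, hi', or_true,
    true_and]
  omega

lemma ReconSeq.card_eq {a : ℕ → ℕ} {S : Finset ℕ} {ℓ : ℕ} {f : ℕ → Finset ℕ}
    (hf : ReconSeq a S ℓ f) {s : ℕ} (hs : s ≤ ℓ) : (f s).card = (f 0).card := by
  induction s with
  | zero => rfl
  | succ s ih => rw [(hf.2 s hs).card_eq, ih (by omega)]

end Reconfiguration

theorem stmt15_general (n : ℕ) (a : ℕ → ℕ)
    (hinj : ∀ i ∈ Finset.Icc 1 n, ∀ j ∈ Finset.Icc 1 n, a i = a j → i = j)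
    (I J : Finset ℕ) (hI : MaxFeasibleIcc a n I) (hJ : MaxFeasibleIcc a n J)
    (hfp : HasForbiddenPair a n I J) :
    ¬ ∃ ℓ f, ReconSeq a (Finset.Icc 1 n) ℓ f ∧ f 0 = I ∧ f ℓ = J := by
  rintro ⟨ℓ, f, hf, rfl, rfl⟩
  obtain ⟨i, j, i', j', hi, hi', hj, hii', hAij, hAi'j', hside⟩ :=
    hfp.exists_mem_pair_or_mem_pair hinj
  have hmax {s : ℕ} (hs : s ≤ ℓ) : MaxFeasibleIcc a n (f s) :=
    hI.of_card_eq (hf.1 s hs).1 (hf.1 s hs).2 (hf.card_eq hs)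
  have hkeep {s : ℕ} (hs : s ≤ ℓ) : i ∈ f s ∧ i' ∈ f s := by
    induction s with
    | zero => exact ⟨hi, hi'⟩
    | succ s ih =>
      have hF := (hmax hs).2.1
      rcases hside _ (hmax hs) with h | ⟨hj, hj'⟩
      · exact h
      rcases (hf.2 s hs).mem_or_mem (ih (by omega)).1 (ih (by omega)).2 hii' with hi | hi'
      · exact absurd hAij (hF.not_adj hi hj)
      · exact absurd hAi'j' (hF.not_adj hi' hj')
  exact hJ.2.1.not_adj (hkeep le_rfl).1 hj hAij

/-- Let `a₁, …, aₙ` be distinct integers between `1` and `n` whose permutation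
graph is bipartite, and let `I` and `J` be maximum feasible sets.  If the
instance `(A, I, J)` has a forbidden pair, then there is no reconfiguration
sequence between `I` and `J`. -/
theorem stmt15 (n : ℕ) (a : ℕ → ℕ) (hn : 0 < n)
    (hmem : ∀ i ∈ Finset.Icc 1 n, a i ∈ Finset.Icc 1 n)
    (hinj : ∀ i ∈ Finset.Icc 1 n, ∀ j ∈ Finset.Icc 1 n, a i = a j → i = j)
    (hbip : (permGraph a n).Colorable 2)
    (I J : Finset ℕ) (hI : MaxFeasibleIcc a n I) (hJ : MaxFeasibleIcc a n J)
    (hfp : HasForbiddenPair a n I J) :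
    ¬ ∃ ℓ f, ReconSeq a (Finset.Icc 1 n) ℓ f ∧ f 0 = I ∧ f ℓ = J :=
  stmt15_general n a hinj I J hI hJ hfp
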